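/- Let W be the Weyl group of a symmetrizable Kac-Moody algebra and suppose i ∈ I is such that β := α̅_i = (α_i + σ(α_i))/2 satisfies (β, β) ≤ 0 (e.g. X[i] = X ∪ {i, τ(i)} is of infinite type). Then no involutive element w ∈ W satisfies w(β) = −β. -/
import Mathlib


open scoped BigOperators

namespace KMStmt

variable {I : Type}

/-- The simple root `α i`, as an element of the root lattice realized inside `I → ℚ`. -/
noncomputable def sr [DecidableEq I] (i : I) : I → ℚ := Pi.single i 1

/-- `A` is a generalized Cartan matrix. -/
def IsGCM [Fintype I] (A : I → I → ℤ) : Prop :=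
  (∀ i, A i i = 2) ∧ (∀ i j, i ≠ j → A i j ≤ 0) ∧ (∀ i j, A i j = 0 → A j i = 0)

/-- `s` realizes the simple reflections on the root lattice:
`s i v = v - ⟨v, αᵢ^∨⟩ αᵢ`, where `⟨α j, αᵢ^∨⟩ = A i j`. -/
def IsReflRep [Fintype I] [DecidableEq I] (A : I → I → ℤ)
    (s : I → ((I → ℚ) ≃ₗ[ℚ] (I → ℚ))) : Prop :=
  ∀ i v, s i v = v - (∑ j, v j * (A i j : ℚ)) • sr i

/-- The Weyl group, as a subgroup of the linear automorphisms of the root space. -/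
def Wgrp [Fintype I] [DecidableEq I] (s : I → ((I → ℚ) ≃ₗ[ℚ] (I → ℚ))) :
    Subgroup ((I → ℚ) ≃ₗ[ℚ] (I → ℚ)) := Subgroup.closure (Set.range s)

/-- The (standard) parabolic subgroup `W_X` generated by the reflections `s i`, `i ∈ X`. -/
def Wpara [Fintype I] [DecidableEq I] (s : I → ((I → ℚ) ≃ₗ[ℚ] (I → ℚ))) (X : Set I) :
    Subgroup ((I → ℚ) ≃ₗ[ℚ] (I → ℚ)) := Subgroup.closure (s '' X)

/-- The nonnegative cone `Q⁺` of the root lattice. -/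
def Qplus [Fintype I] : Set (I → ℚ) := {v | ∀ j, ∃ n : ℕ, v j = (n : ℚ)}

/-- The projection `λ ↦ λ̄ = (λ + σ(λ))/2` onto the `σ`-fixed subspace. -/
noncomputable def bar [Fintype I] (σ : (I → ℚ) → (I → ℚ)) (v : I → ℚ) : I → ℚ :=
  (2⁻¹ : ℚ) • (v + σ v)

/-- `σ = w_X ∘ τ` as a map on the root space. -/
def σmap [Fintype I] (wX tV : (I → ℚ) ≃ₗ[ℚ] (I → ℚ)) : (I → ℚ) → (I → ℚ) :=
  fun v => wX (tV v)

/-- `(X, τ)` is a compatible decoration, with `tV` the action of `τ` on the root space and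
`wX` the longest element of the (finite) parabolic subgroup `W_X`:
`τ` is an involutive diagram automorphism of `A` stabilizing `X`, `X` is of finite type,
and `τ|_X` is the opposition involution of `X` (i.e. `w_X (α i) = -α (τ i)` for `i ∈ X`). -/
def IsCompatibleDec [Fintype I] [DecidableEq I] (A : I → I → ℤ)
    (s : I → ((I → ℚ) ≃ₗ[ℚ] (I → ℚ))) (X : Set I) (τ : Equiv.Perm I)
    (tV wX : (I → ℚ) ≃ₗ[ℚ] (I → ℚ)) : Prop :=
  (∀ i j, A (τ i) (τ j) = A i j) ∧ (∀ i, τ (τ i) = i) ∧ (∀ i ∈ X, τ i ∈ X) ∧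
  (∀ i, tV (sr i) = sr (τ i)) ∧
  Finite (Wpara s X) ∧ wX ∈ Wpara s X ∧ wX * wX = 1 ∧
  (∀ i ∈ X, wX (sr i) = - sr (τ i))

/-- `(X, τ)` is a generalized Satake diagram: (it is a compatible decoration and) there is no
`i ∈ I \ X` with `τ i = i` whose connected component in `X ∪ {i}` is of type `A₂`. -/
def IsGSat [Fintype I] (A : I → I → ℤ) (X : Set I) (τ : Equiv.Perm I) : Prop :=
  ¬ ∃ i, i ∉ X ∧ τ i = i ∧ ∃ j ∈ X, A i j = -1 ∧ A j i = -1 ∧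
      ∀ k ∈ X, k ≠ j → A i k = 0 ∧ A j k = 0

/-- `B` is the invariant symmetric bilinear form, with symmetrizers `ε`. -/
def IsInvForm [Fintype I] [DecidableEq I] (A : I → I → ℤ) (ε : I → ℚ)
    (B : (I → ℚ) →ₗ[ℚ] (I → ℚ) →ₗ[ℚ] ℚ)
    (s : I → ((I → ℚ) ≃ₗ[ℚ] (I → ℚ))) : Prop :=
  (∀ i, 0 < ε i) ∧ (∀ u v, B u v = B v u) ∧
  (∀ i j, B (sr i) (sr j) = ε i * (A i j : ℚ)) ∧
  (∀ i u v, B (s i u) (s i v) = B u v)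

/-- `Φ` is the root system: it contains the simple roots, is stable under the simple
reflections and under negation, does not contain `0`, and every root is positive or
negative. -/
def IsRootSystem [Fintype I] [DecidableEq I]
    (s : I → ((I → ℚ) ≃ₗ[ℚ] (I → ℚ))) (Φ : Set (I → ℚ)) : Prop :=
  (∀ i, sr i ∈ Φ) ∧ (0 ∉ Φ) ∧ (∀ v ∈ Φ, v ∈ (Qplus : Set (I → ℚ)) ∨ -v ∈ (Qplus : Set (I → ℚ))) ∧
  (∀ i, ∀ v ∈ Φ, s i v ∈ Φ) ∧ (∀ v ∈ Φ, -v ∈ Φ)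

/-- The orthogonal reflection `s_β : v ↦ v - 2 (β, v)/(β, β) β`, as an endomorphism. -/
noncomputable def reflMap [Fintype I] (B : (I → ℚ) →ₗ[ℚ] (I → ℚ) →ₗ[ℚ] ℚ)
    (β : I → ℚ) : Module.End ℚ (I → ℚ) :=
  LinearMap.id - (B β).smulRight ((2 / B β β) • β)

/-- `Istar` is a set of representatives of the `τ`-orbits on `I \ X`. -/
def IsOrbitReps [Fintype I] [DecidableEq I] (X : Finset I) (τ : Equiv.Perm I)
    (Istar : Finset I) : Prop :=
  (∀ i ∈ Istar, i ∉ X) ∧ (∀ i, i ∉ X → i ∈ Istar ∨ τ i ∈ Istar) ∧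
  (∀ i ∈ Istar, τ i ∈ Istar → τ i = i)

/-- The restricted root system `Φ̄ = { λ̄ : λ ∈ Φ } \ {0}`. -/
noncomputable def restRoots [Fintype I] (σ : (I → ℚ) → (I → ℚ)) (Φ : Set (I → ℚ)) :
    Set (I → ℚ) := {u | u ≠ 0 ∧ ∃ l ∈ Φ, u = bar σ l}

section Proof
set_option linter.unusedSectionVars false
set_option linter.unusedVariables false

variable [Fintype I] [DecidableEq I]

/-- Coroot pairing `⟨v, α_j^∨⟩`. -/
def cf (A : I → I → ℤ) (j : I) (v : I → ℚ) : ℚ := ∑ k, v k * (A j k : ℚ)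

/-- `v` written in coordinates. -/
lemma eq_sum_sr (v : I → ℚ) : v = ∑ k, v k • sr k := by
  have h : ∀ k, v k • sr k = Pi.single k (v k) := by
    intro k
    ext m
    by_cases h : m = k <;> simp [sr, Pi.single_apply, h]
  rw [funext h]
  exact (Finset.univ_sum_single v).symm

lemma sr_apply (i k : I) : sr i k = if k = i then 1 else 0 := by
  unfold sr; rw [Pi.single_apply]

lemma sr_apply_self (i : I) : sr i i = 1 := by simp [sr_apply]

variable {A : I → I → ℤ} {s : I → ((I → ℚ) ≃ₗ[ℚ] (I → ℚ))}

lemma s_apply (hs : IsReflRep A s) (j : I) (v : I → ℚ) :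
    s j v = v - cf A j v • sr j := hs j v

lemma cf_sr (hs : IsReflRep A s) (j k : I) : cf A j (sr k) = (A j k : ℚ) := by
  unfold cf
  rw [Finset.sum_eq_single k]
  · simp [sr_apply]
  · intro m _ hm; simp [sr_apply, hm]
  · intro h; exact absurd (Finset.mem_univ k) h

lemma cf_sub (j : I) (u w : I → ℚ) : cf A j (u - w) = cf A j u - cf A j w := by
  unfold cf
  rw [← Finset.sum_sub_distrib]
  refine Finset.sum_congr rfl (fun k _ => ?_)
  simp [sub_mul]

lemma cf_smul (j : I) (c : ℚ) (u : I → ℚ) : cf A j (c • u) = c * cf A j u := by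
  unfold cf
  rw [Finset.mul_sum]
  refine Finset.sum_congr rfl (fun k _ => ?_)
  simp [mul_assoc]

lemma s_apply_sr (hA : IsGCM A) (hs : IsReflRep A s) (j : I) :
    s j (sr j) = - sr j := by
  rw [s_apply hs, cf_sr hs, hA.1 j]
  push_cast; module

lemma s_sq (hA : IsGCM A) (hs : IsReflRep A s) (j : I) : s j * s j = 1 := by
  apply LinearEquiv.toLinearMap_injective
  apply LinearMap.ext
  intro v
  show s j (s j v) = v
  rw [s_apply hs j v, s_apply hs j (v - cf A j v • sr j), cf_sub, cf_smul, cf_sr hs, hA.1 j]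
  push_cast
  module

lemma s_inv (hA : IsGCM A) (hs : IsReflRep A s) (j : I) : (s j)⁻¹ = s j :=
  inv_eq_of_mul_eq_one_right (s_sq hA hs j)

/-- product of the reflections along a word -/
def wprod (s : I → ((I → ℚ) ≃ₗ[ℚ] (I → ℚ))) (l : List I) : (I → ℚ) ≃ₗ[ℚ] (I → ℚ) :=
  (l.map s).prod

lemma wprod_nil : wprod s [] = 1 := rfl

lemma wprod_cons (x : I) (t : List I) : wprod s (x :: t) = s x * wprod s t := by
  unfold wprod; rw [List.map_cons, List.prod_cons]

lemma wprod_append (l₁ l₂ : List I) : wprod s (l₁ ++ l₂) = wprod s l₁ * wprod s l₂ := by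
  unfold wprod; rw [List.map_append, List.prod_append]

lemma wprod_reverse (hA : IsGCM A) (hs : IsReflRep A s) (l : List I) :
    wprod s l.reverse = (wprod s l)⁻¹ := by
  induction l with
  | nil => simp [wprod_nil]
  | cons x t ih =>
      rw [List.reverse_cons, wprod_append, wprod_cons, ih]
      show (wprod s t)⁻¹ * wprod s [x] = (s x * wprod s t)⁻¹
      rw [mul_inv_rev, s_inv hA hs]
      rw [show wprod s [x] = s x from by rw [wprod_cons, wprod_nil, mul_one]]

lemma wprod_mem (l : List I) : wprod s l ∈ Wgrp s := by
  induction l with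
  | nil => exact Subgroup.one_mem _
  | cons x t ih =>
      rw [wprod_cons]
      exact Subgroup.mul_mem _ (Subgroup.subset_closure ⟨x, rfl⟩) ih

lemma wprod_memX {X : Set I} (l : List I) (hl : ∀ x ∈ l, x ∈ X) : wprod s l ∈ Wpara s X := by
  induction l with
  | nil => exact Subgroup.one_mem _
  | cons x t ih =>
      rw [wprod_cons]
      refine Subgroup.mul_mem _ (Subgroup.subset_closure ⟨x, hl x (by simp), rfl⟩) ?_
      exact ih (fun y hy => hl y (by simp [hy]))

/-- existence of words for elements of `Wgrp` -/
lemma exists_word (hA : IsGCM A) (hs : IsReflRep A s)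
    {w : (I → ℚ) ≃ₗ[ℚ] (I → ℚ)} (hw : w ∈ Wgrp s) : ∃ l : List I, wprod s l = w := by
  refine Subgroup.closure_induction ?_ ⟨[], rfl⟩ ?_ ?_ hw
  · rintro x ⟨j, rfl⟩
    exact ⟨[j], by rw [wprod_cons, wprod_nil, mul_one]⟩
  · rintro x y _ _ ⟨lx, rfl⟩ ⟨ly, rfl⟩
    exact ⟨lx ++ ly, wprod_append lx ly⟩
  · rintro x _ ⟨lx, rfl⟩
    exact ⟨lx.reverse, wprod_reverse hA hs lx⟩

lemma exists_wordX (hA : IsGCM A) (hs : IsReflRep A s) {X : Set I}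
    {w : (I → ℚ) ≃ₗ[ℚ] (I → ℚ)} (hw : w ∈ Wpara s X) :
    ∃ l : List I, (∀ x ∈ l, x ∈ X) ∧ wprod s l = w := by
  refine Subgroup.closure_induction ?_ ⟨[], by simp, rfl⟩ ?_ ?_ hw
  · rintro x ⟨j, hj, rfl⟩
    exact ⟨[j], by simpa using hj, by rw [wprod_cons, wprod_nil, mul_one]⟩
  · rintro x y _ _ ⟨lx, hlx, rfl⟩ ⟨ly, hly, rfl⟩
    refine ⟨lx ++ ly, ?_, wprod_append lx ly⟩
    intro z hz; rcases List.mem_append.mp hz with h | h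
    exacts [hlx z h, hly z h]
  · rintro x _ ⟨lx, hlx, rfl⟩
    exact ⟨lx.reverse, fun z hz => hlx z (List.mem_reverse.mp hz), wprod_reverse hA hs lx⟩

/-! ### Words, lengths, parity -/

def HasW (s : I → ((I → ℚ) ≃ₗ[ℚ] (I → ℚ))) (T : Set I) (w : (I → ℚ) ≃ₗ[ℚ] (I → ℚ)) : Prop :=
  ∃ l : List I, (∀ x ∈ l, x ∈ T) ∧ wprod s l = w

noncomputable def lenS (s : I → ((I → ℚ) ≃ₗ[ℚ] (I → ℚ))) (T : Set I)
    (w : (I → ℚ) ≃ₗ[ℚ] (I → ℚ)) : ℕ :=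
  sInf {n | ∃ l : List I, (∀ x ∈ l, x ∈ T) ∧ l.length = n ∧ wprod s l = w}

lemma lenS_exists {T : Set I} {w : (I → ℚ) ≃ₗ[ℚ] (I → ℚ)} (h : HasW s T w) :
    ∃ l : List I, (∀ x ∈ l, x ∈ T) ∧ l.length = lenS s T w ∧ wprod s l = w := by
  obtain ⟨l, hl, hw⟩ := h
  have : lenS s T w ∈ {n | ∃ l : List I, (∀ x ∈ l, x ∈ T) ∧ l.length = n ∧ wprod s l = w} :=
    Nat.sInf_mem ⟨l.length, l, hl, rfl, hw⟩
  exact this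

lemma lenS_le {T : Set I} {w : (I → ℚ) ≃ₗ[ℚ] (I → ℚ)} {l : List I}
    (hl : ∀ x ∈ l, x ∈ T) (hw : wprod s l = w) : lenS s T w ≤ l.length :=
  Nat.sInf_le ⟨l, hl, rfl, hw⟩

lemma HasW_sx {T : Set I} (x : I) (hx : x ∈ T) : HasW s T (s x) :=
  ⟨[x], by simpa using hx, by rw [wprod_cons, wprod_nil, mul_one]⟩

lemma HasW_mul {T : Set I} {w v : (I → ℚ) ≃ₗ[ℚ] (I → ℚ)}
    (hw : HasW s T w) (hv : HasW s T v) : HasW s T (w * v) := by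
  obtain ⟨lw, hlw, rfl⟩ := hw
  obtain ⟨lv, hlv, rfl⟩ := hv
  refine ⟨lw ++ lv, ?_, (wprod_append lw lv)⟩
  intro z hz
  rcases List.mem_append.mp hz with h | h
  exacts [hlw z h, hlv z h]

lemma lenS_mul_sx_le {T : Set I} {w : (I → ℚ) ≃ₗ[ℚ] (I → ℚ)} {x : I}
    (hw : HasW s T w) (hx : x ∈ T) : lenS s T (w * s x) ≤ lenS s T w + 1 := by
  obtain ⟨l, hl, hlen, rfl⟩ := lenS_exists hw
  have hxl : ∀ z ∈ l ++ [x], z ∈ T := by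
    intro z hz
    rcases List.mem_append.mp hz with h | h
    · exact hl z h
    · rw [List.mem_singleton.mp h]; exact hx
  have hww : wprod s (l ++ [x]) = wprod s l * s x := by
    rw [wprod_append, wprod_cons, wprod_nil, mul_one]
  have h2 := lenS_le (s := s) hxl hww
  rw [List.length_append, List.length_singleton, hlen] at h2
  exact h2

lemma lenS_le_mul_sx (hA : IsGCM A) (hs : IsReflRep A s)
    {T : Set I} {w : (I → ℚ) ≃ₗ[ℚ] (I → ℚ)} {x : I}
    (hw : HasW s T (w * s x)) (hx : x ∈ T) : lenS s T w ≤ lenS s T (w * s x) + 1 := by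
  have h := lenS_mul_sx_le (s := s) (w := w * s x) hw hx
  have : w * s x * s x = w := by rw [mul_assoc, s_sq hA hs, mul_one]
  rwa [this] at h

lemma lenS_zero_eq_one {T : Set I} {w : (I → ℚ) ≃ₗ[ℚ] (I → ℚ)}
    (hw : HasW s T w) (h : lenS s T w = 0) : w = 1 := by
  obtain ⟨l, _, hlen, hl⟩ := lenS_exists hw
  rw [h] at hlen
  rw [List.length_eq_zero_iff.mp hlen] at hl
  rw [← hl, wprod_nil]

/-! ### Determinant parity -/

lemma det_s (hA : IsGCM A) (hs : IsReflRep A s) (j : I) :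
    LinearMap.det ((s j : (I → ℚ) ≃ₗ[ℚ] (I → ℚ)) : (I → ℚ) →ₗ[ℚ] (I → ℚ)) = -1 := by
  classical
  let b := Pi.basisFun ℚ I
  rw [← LinearMap.det_toMatrix b]
  have hM : LinearMap.toMatrix b b ((s j : (I → ℚ) ≃ₗ[ℚ] (I → ℚ)) : (I → ℚ) →ₗ[ℚ] (I → ℚ))
      = 1 + Matrix.replicateCol Unit (fun k => if k = j then (-1 : ℚ) else 0)
          * Matrix.replicateRow Unit (fun l => (A j l : ℚ)) := by
    ext k l
    rw [LinearMap.toMatrix_apply]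
    have hb : b l = sr l := by simp [b, sr]
    have hs' : ((s j : (I → ℚ) ≃ₗ[ℚ] (I → ℚ)) : (I → ℚ) →ₗ[ℚ] (I → ℚ)) (b l)
        = sr l - (A j l : ℚ) • sr j := by
      rw [hb]
      show (s j) (sr l) = sr l - (A j l : ℚ) • sr j
      rw [s_apply hs, cf_sr hs]
    rw [hs']
    have hrepr : ∀ u : I → ℚ, b.repr u k = u k := fun u => by simp [b]
    rw [hrepr]
    rw [Matrix.add_apply, Matrix.mul_apply, Matrix.one_apply]
    simp only [Matrix.replicateCol_apply, Matrix.replicateRow_apply, Finset.univ_unique, Finset.sum_const,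
      Finset.card_singleton, one_smul, Pi.sub_apply, Pi.smul_apply, smul_eq_mul, sr_apply]
    split_ifs <;> ring
  rw [hM, Matrix.det_one_add_replicateCol_mul_replicateRow]
  show 1 + ∑ k, (A j k : ℚ) * (if k = j then (-1 : ℚ) else 0) = -1
  rw [Finset.sum_eq_single j]
  · rw [hA.1 j]; norm_num
  · intro m _ hm; simp [hm]
  · intro h; exact absurd (Finset.mem_univ j) h

lemma det_wprod (hA : IsGCM A) (hs : IsReflRep A s) (l : List I) :
    LinearMap.det ((wprod s l : (I → ℚ) ≃ₗ[ℚ] (I → ℚ)) : (I → ℚ) →ₗ[ℚ] (I → ℚ))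
      = (-1 : ℚ) ^ l.length := by
  induction l with
  | nil => simp [wprod_nil]
  | cons x t ih =>
      rw [wprod_cons]
      have : ((s x * wprod s t : (I → ℚ) ≃ₗ[ℚ] (I → ℚ)) : (I → ℚ) →ₗ[ℚ] (I → ℚ))
          = ((s x : (I → ℚ) ≃ₗ[ℚ] (I → ℚ)) : (I → ℚ) →ₗ[ℚ] (I → ℚ))
            ∘ₗ ((wprod s t : (I → ℚ) ≃ₗ[ℚ] (I → ℚ)) : (I → ℚ) →ₗ[ℚ] (I → ℚ)) := rfl
      rw [this, LinearMap.det_comp, det_s hA hs, ih]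
      rw [List.length_cons, pow_succ]
      ring

lemma det_eq_len (hA : IsGCM A) (hs : IsReflRep A s) {T : Set I}
    {w : (I → ℚ) ≃ₗ[ℚ] (I → ℚ)} (hw : HasW s T w) :
    LinearMap.det ((w : (I → ℚ) ≃ₗ[ℚ] (I → ℚ)) : (I → ℚ) →ₗ[ℚ] (I → ℚ))
      = (-1 : ℚ) ^ (lenS s T w) := by
  obtain ⟨l, _, hlen, rfl⟩ := lenS_exists hw
  rw [det_wprod hA hs, hlen]

lemma lenS_mul_sx_ne (hA : IsGCM A) (hs : IsReflRep A s) {T : Set I}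
    {w : (I → ℚ) ≃ₗ[ℚ] (I → ℚ)} {x : I} (hw : HasW s T w) (hx : x ∈ T) :
    lenS s T (w * s x) ≠ lenS s T w := by
  intro hcontra
  have h1 := det_eq_len hA hs (HasW_mul hw (HasW_sx x hx))
  have h2 := det_eq_len hA hs hw
  have h3 : ((w * s x : (I → ℚ) ≃ₗ[ℚ] (I → ℚ)) : (I → ℚ) →ₗ[ℚ] (I → ℚ))
      = ((w : (I → ℚ) ≃ₗ[ℚ] (I → ℚ)) : (I → ℚ) →ₗ[ℚ] (I → ℚ))
        ∘ₗ ((s x : (I → ℚ) ≃ₗ[ℚ] (I → ℚ)) : (I → ℚ) →ₗ[ℚ] (I → ℚ)) := rfl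
  rw [h3, LinearMap.det_comp, det_s hA hs, h2, hcontra] at h1
  have h4 : (-1 : ℚ) ^ lenS s T w ≠ 0 := pow_ne_zero _ (by norm_num)
  exact h4 (by linarith)

/-! ### Bilinear form lemmas -/

variable {ε : I → ℚ} {B : (I → ℚ) →ₗ[ℚ] (I → ℚ) →ₗ[ℚ] ℚ}

lemma B_sr_left (hB : IsInvForm A ε B s) (j : I) (v : I → ℚ) :
    B (sr j) v = ε j * cf A j v := by
  rw [show B (sr j) v = B (sr j) (∑ k, v k • sr k) from by rw [← eq_sum_sr v]]
  rw [map_sum]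
  unfold cf
  rw [Finset.mul_sum]
  refine Finset.sum_congr rfl (fun k _ => ?_)
  rw [map_smul, smul_eq_mul, hB.2.2.1 j k]
  ring

lemma B_expand_left (u v : I → ℚ) : B u v = ∑ k, u k * B (sr k) v := by
  rw [show B u v = B (∑ k, u k • sr k) v from by rw [← eq_sum_sr u]]
  rw [map_sum, LinearMap.sum_apply]
  refine Finset.sum_congr rfl (fun k _ => ?_)
  rw [map_smul, LinearMap.smul_apply, smul_eq_mul]

lemma B_expand_right (u v : I → ℚ) : B u v = ∑ k, v k * B u (sr k) := by
  rw [show B u v = B u (∑ k, v k • sr k) from by rw [← eq_sum_sr v]]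
  rw [map_sum]
  refine Finset.sum_congr rfl (fun k _ => ?_)
  rw [map_smul, smul_eq_mul]

lemma Binv_wprod (hB : IsInvForm A ε B s) (l : List I) (u v : I → ℚ) :
    B (wprod s l u) (wprod s l v) = B u v := by
  induction l with
  | nil => rfl
  | cons x t ih =>
      rw [wprod_cons]
      show B ((s x) (wprod s t u)) ((s x) (wprod s t v)) = B u v
      rw [hB.2.2.2 x, ih]

/-! ### Cones, supports, integrality -/

def NN (v : I → ℚ) : Prop := ∀ k, 0 ≤ v k

def NP (v : I → ℚ) : Prop := ∀ k, v k ≤ 0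

lemma wprod_coord (hs : IsReflRep A s) {T : Set I} (l : List I) (hl : ∀ x ∈ l, x ∈ T)
    (v : I → ℚ) {k : I} (hk : k ∉ T) : wprod s l v k = v k := by
  induction l with
  | nil => rfl
  | cons x t ih =>
      rw [wprod_cons]
      show (s x) (wprod s t v) k = v k
      rw [s_apply hs]
      have hxk : k ≠ x := fun h => hk (h ▸ hl x (by simp))
      simp only [Pi.sub_apply, Pi.smul_apply, sr_apply, if_neg hxk, smul_eq_mul, mul_zero,
        sub_zero]
      exact ih (fun y hy => hl y (by simp [hy]))

def IsZ (v : I → ℚ) : Prop := ∀ k, ∃ z : ℤ, v k = z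

lemma IsZ_sr (j : I) : IsZ (sr j) := by
  intro k
  refine ⟨if k = j then 1 else 0, ?_⟩
  rw [sr_apply]
  split_ifs <;> norm_num

lemma IsZ_cf (j : I) {v : I → ℚ} (hv : IsZ v) : ∃ z : ℤ, cf A j v = z := by
  obtain ⟨f, hf⟩ : ∃ f : I → ℤ, ∀ k, v k = f k :=
    ⟨fun k => (hv k).choose, fun k => (hv k).choose_spec⟩
  refine ⟨∑ k, f k * A j k, ?_⟩
  unfold cf
  push_cast
  exact Finset.sum_congr rfl (fun k _ => by rw [hf k])

lemma IsZ_wprod (hs : IsReflRep A s) (l : List I) {v : I → ℚ} (hv : IsZ v) :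
    IsZ (wprod s l v) := by
  induction l with
  | nil => exact hv
  | cons x t ih =>
      rw [wprod_cons]
      show IsZ ((s x) (wprod s t v))
      rw [s_apply hs]
      intro k
      obtain ⟨z1, hz1⟩ := ih k
      obtain ⟨z2, hz2⟩ := IsZ_cf (A := A) x ih
      obtain ⟨z3, hz3⟩ := IsZ_sr (I := I) x k
      exact ⟨z1 - z2 * z3, by
        simp only [Pi.sub_apply, Pi.smul_apply, smul_eq_mul, hz1, hz2, hz3]; push_cast; ring⟩

lemma int_sq_ge_one {x : ℚ} (hx : ∃ z : ℤ, x = z) (h : x ≠ 0) : 1 ≤ x * x := by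
  obtain ⟨z, rfl⟩ := hx
  have hz : z ≠ 0 := by exact_mod_cast h
  have h1 : (1 : ℤ) ≤ z * z := by
    rcases lt_or_gt_of_ne hz with h' | h' <;> nlinarith
  exact_mod_cast h1

/-! ### Rank-2 dichotomy -/

lemma rank2_dichotomy (hA : IsGCM A) (hs : IsReflRep A s) (hB : IsInvForm A ε B s)
    {p q : I} (hpq : p ≠ q) (l : List I) (hl : ∀ x ∈ l, x = p ∨ x = q) :
    NN (wprod s l (sr p)) ∨ NP (wprod s l (sr p)) := by
  set v := wprod s l (sr p) with hv
  have hlT : ∀ x ∈ l, x ∈ ({y | y = p ∨ y = q} : Set I) := hl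
  have hsupp : ∀ k, k ≠ p → k ≠ q → v k = 0 := by
    intro k hk1 hk2
    rw [hv, wprod_coord hs l hlT (sr p) (by simp [hk1, hk2])]
    rw [sr_apply, if_neg hk1]
  have hint : IsZ v := IsZ_wprod hs l (IsZ_sr p)
  have hveq : v = v p • sr p + v q • sr q := by
    ext k
    by_cases hk1 : k = p
    · subst hk1; simp [sr_apply, hpq, Ne.symm hpq]
    by_cases hk2 : k = q
    · subst hk2; simp [sr_apply, hpq, Ne.symm hpq, hk1]
    · simp [sr_apply, hk1, hk2, hsupp k hk1 hk2]
  have hnorm : B v v = ε p * 2 := by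
    rw [hv, Binv_wprod hB, hB.2.2.1 p p, hA.1 p]
    norm_num
  have hexp : B v v = v p * v p * (ε p * (A p p : ℚ)) + v p * v q * (ε p * (A p q : ℚ))
      + (v q * v p * (ε q * (A q p : ℚ)) + v q * v q * (ε q * (A q q : ℚ))) := by
    conv_lhs => rw [hveq]
    simp only [map_add, map_smul, LinearMap.add_apply, LinearMap.smul_apply, smul_eq_mul,
      hB.2.2.1]
    ring
  have hApq : (A p q : ℚ) ≤ 0 := by exact_mod_cast hA.2.1 p q hpq
  have hAqp : (A q p : ℚ) ≤ 0 := by exact_mod_cast hA.2.1 q p (Ne.symm hpq)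
  have hApp : (A p p : ℚ) = 2 := by exact_mod_cast hA.1 p
  have hAqq : (A q q : ℚ) = 2 := by exact_mod_cast hA.1 q
  have hεp := hB.1 p
  have hεq := hB.1 q
  have hcontra : ¬ ((0 < v p ∧ v q < 0) ∨ (v p < 0 ∧ 0 < v q)) := by
    rintro (⟨h1, h2⟩ | ⟨h1, h2⟩)
    · have ha : 1 ≤ v p * v p := int_sq_ge_one (hint p) (ne_of_gt h1)
      have hb : 1 ≤ v q * v q := int_sq_ge_one (hint q) (ne_of_lt h2)
      have c1 : 0 ≤ v p * v q * (ε p * (A p q : ℚ)) :=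
        mul_nonneg_iff.mpr (Or.inr ⟨by nlinarith, mul_nonpos_iff.mpr (Or.inl ⟨le_of_lt hεp, hApq⟩)⟩)
      have c2 : 0 ≤ v q * v p * (ε q * (A q p : ℚ)) :=
        mul_nonneg_iff.mpr (Or.inr ⟨by nlinarith, mul_nonpos_iff.mpr (Or.inl ⟨le_of_lt hεq, hAqp⟩)⟩)
      rw [hnorm, hApp, hAqq] at hexp
      nlinarith
    · have ha : 1 ≤ v p * v p := int_sq_ge_one (hint p) (ne_of_lt h1)
      have hb : 1 ≤ v q * v q := int_sq_ge_one (hint q) (ne_of_gt h2)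
      have c1 : 0 ≤ v p * v q * (ε p * (A p q : ℚ)) :=
        mul_nonneg_iff.mpr (Or.inr ⟨by nlinarith, mul_nonpos_iff.mpr (Or.inl ⟨le_of_lt hεp, hApq⟩)⟩)
      have c2 : 0 ≤ v q * v p * (ε q * (A q p : ℚ)) :=
        mul_nonneg_iff.mpr (Or.inr ⟨by nlinarith, mul_nonpos_iff.mpr (Or.inl ⟨le_of_lt hεq, hAqp⟩)⟩)
      rw [hnorm, hApp, hAqq] at hexp
      nlinarith
  rcases le_or_gt 0 (v p) with hp | hp <;> rcases le_or_gt 0 (v q) with hq | hq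
  · left
    intro k
    by_cases hk1 : k = p
    · subst hk1; exact hp
    by_cases hk2 : k = q
    · subst hk2; exact hq
    · rw [hsupp k hk1 hk2]
  · rcases eq_or_lt_of_le hp with heq | hlt
    · right
      intro k
      by_cases hk1 : k = p
      · subst hk1; rw [← heq]
      by_cases hk2 : k = q
      · subst hk2; exact le_of_lt hq
      · rw [hsupp k hk1 hk2]
    · exact absurd (Or.inl ⟨hlt, hq⟩) hcontra
  · rcases eq_or_lt_of_le hq with heq | hlt
    · right
      intro k
      by_cases hk1 : k = p
      · subst hk1; exact le_of_lt hp
      by_cases hk2 : k = q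
      · subst hk2; rw [← heq]
      · rw [hsupp k hk1 hk2]
    · exact absurd (Or.inr ⟨hp, hlt⟩) hcontra
  · right
    intro k
    by_cases hk1 : k = p
    · subst hk1; exact le_of_lt hp
    by_cases hk2 : k = q
    · subst hk2; exact le_of_lt hq
    · rw [hsupp k hk1 hk2]

/-! ### Reflection conjugation -/

lemma refl_conj (hA : IsGCM A) (hs : IsReflRep A s) (hB : IsInvForm A ε B s)
    {g : (I → ℚ) ≃ₗ[ℚ] (I → ℚ)} (hg : ∀ u v, B (g u) (g v) = B u v)
    {x p : I} {c : ℚ} (hc : c ≠ 0) (hgp : g (sr p) = c • sr x) :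
    s x * g = g * s p := by
  have hεx := hB.1 x
  have hεp := hB.1 p
  have hcc : c * c * (ε x * 2) = ε p * 2 := by
    have h := hg (sr p) (sr p)
    rw [hgp] at h
    simp only [map_smul, LinearMap.smul_apply, smul_eq_mul] at h
    rw [hB.2.2.1 x x, hB.2.2.1 p p, hA.1 x, hA.1 p] at h
    push_cast at h
    linarith
  apply LinearEquiv.toLinearMap_injective
  apply LinearMap.ext
  intro u
  show (s x) (g u) = g ((s p) u)
  rw [s_apply hs, s_apply hs, map_sub, map_smul, hgp]
  have h1 : ε x * cf A x (g u) = B (sr x) (g u) := (B_sr_left hB x _).symm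
  have h3 : B (g (sr p)) (g u) = c * B (sr x) (g u) := by
    rw [hgp, map_smul, LinearMap.smul_apply, smul_eq_mul]
  have h2 : B (g (sr p)) (g u) = ε p * cf A p u := by rw [hg, B_sr_left hB]
  have key : cf A x (g u) = c * cf A p u := by
    have hne : c * ε x ≠ 0 := mul_ne_zero hc (ne_of_gt hεx)
    apply mul_left_cancel₀ hne
    have hh : c * (ε x * cf A x (g u)) = (c * c * ε x) * cf A p u := by
      rw [h1, ← h3, h2]
      have : c * c * ε x = ε p := by linarith
      rw [this]
    calc c * ε x * cf A x (g u) = c * (ε x * cf A x (g u)) := by ring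
      _ = (c * c * ε x) * cf A p u := hh
      _ = c * ε x * (c * cf A p u) := by ring
  rw [key, smul_smul, mul_comm c (cf A p u)]

/-! ### Surgery lemma -/

lemma surgery (hA : IsGCM A) (hs : IsReflRep A s) (hB : IsInvForm A ε B s)
    {p q : I} (hpq : p ≠ q) :
    ∀ l : List I, (∀ x ∈ l, x = p ∨ x = q) → NP (wprod s l (sr p)) →
      ∃ l' : List I, (∀ x ∈ l', x = p ∨ x = q) ∧ l'.length + 1 = l.length ∧
        wprod s l' = wprod s l * s p := by
  intro l
  induction l with
  | nil =>
      intro _ hneg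
      have := hneg p
      rw [wprod_nil] at this
      rw [show ((1 : (I → ℚ) ≃ₗ[ℚ] (I → ℚ)) (sr p)) = sr p from rfl, sr_apply_self] at this
      norm_num at this
  | cons x t ih =>
      intro hl hneg
      have hlt : ∀ y ∈ t, y = p ∨ y = q := fun y hy => hl y (by simp [hy])
      have hx := hl x (by simp)
      rcases rank2_dichotomy hA hs hB hpq t hlt with hdic | hdic
      · -- g (sr p) is nonnegative; it must be supported at x only
        set g := wprod s t with hg
        set v := g (sr p) with hv
        have hcoordeq : ∀ k, (wprod s (x :: t)) (sr p) k = (s x) v k := by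
          intro k; rw [wprod_cons]; rfl
        have hvx : ∀ k, k ≠ x → v k = 0 := by
          intro k hk
          have h1 : (s x) v k = v k := by
            rw [s_apply hs]
            simp only [Pi.sub_apply, Pi.smul_apply, sr_apply, if_neg hk, smul_eq_mul, mul_zero,
              sub_zero]
          have h2 := hneg k
          rw [hcoordeq k, h1] at h2
          exact le_antisymm h2 (hdic k)
        have hveq : v = v x • sr x := by
          ext k
          by_cases hk : k = x
          · subst hk; simp [sr_apply_self]
          · rw [hvx k hk]
            simp [sr_apply, hk]
        have hv0 : v x ≠ 0 := by
          intro h0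
          have hz : v = 0 := by rw [hveq, h0, zero_smul]
          have : sr p = 0 := by
            have := hz
            rw [hv] at this
            exact (LinearEquiv.map_eq_zero_iff g).mp this
          have h1 : (sr p) p = 1 := sr_apply_self p
          rw [this] at h1
          norm_num at h1
        have hconj : s x * g = g * s p :=
          refl_conj hA hs hB (fun u w => Binv_wprod hB t u w) hv0 (by rw [← hv]; exact hveq)
        refine ⟨t, hlt, by simp, ?_⟩
        rw [wprod_cons, ← hg, hconj, mul_assoc, s_sq hA hs, mul_one]
      · obtain ⟨t', ht', hlen, heq⟩ := ih hlt hdic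
        refine ⟨x :: t', ?_, ?_, ?_⟩
        · intro y hy
          rcases List.mem_cons.mp hy with h | h
          · exact h ▸ hx
          · exact ht' y h
        · simp only [List.length_cons]; omega
        · rw [wprod_cons, heq, wprod_cons, mul_assoc]

/-! ### Dihedral lemma -/

lemma mem_pair_iff {p q x : I} : x ∈ ({p, q} : Set I) ↔ x = p ∨ x = q := by
  simp [Set.mem_insert_iff, Set.mem_singleton_iff]

lemma dihedral (hA : IsGCM A) (hs : IsReflRep A s) (hB : IsInvForm A ε B s)
    {p q : I} (hpq : p ≠ q) {d : (I → ℚ) ≃ₗ[ℚ] (I → ℚ)}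
    (hd : HasW s ({p, q} : Set I) d)
    (hlen : lenS s ({p, q} : Set I) d < lenS s ({p, q} : Set I) (d * s p)) :
    NN (d (sr p)) ∧ (∀ k, k ≠ p → k ≠ q → d (sr p) k = 0) := by
  obtain ⟨l, hl, hll, rfl⟩ := lenS_exists hd
  have hl' : ∀ x ∈ l, x = p ∨ x = q := fun x hx => mem_pair_iff.mp (hl x hx)
  have hsupp : ∀ k, k ≠ p → k ≠ q → wprod s l (sr p) k = 0 := by
    intro k hk1 hk2
    rw [wprod_coord hs l hl (sr p) (by simp [hk1, hk2]), sr_apply, if_neg hk1]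
  rcases rank2_dichotomy hA hs hB hpq l hl' with h | h
  · exact ⟨h, hsupp⟩
  · exfalso
    obtain ⟨l', hl'', hlen', heq⟩ := surgery hA hs hB hpq l hl' h
    have hle : lenS s ({p, q} : Set I) (wprod s l * s p) ≤ l'.length :=
      lenS_le (fun x hx => mem_pair_iff.mpr (hl'' x hx)) heq
    omega

/-! ### Key theorem: images of simple roots under length-increasing elements are nonnegative -/

theorem thmR (hA : IsGCM A) (hs : IsReflRep A s) (hB : IsInvForm A ε B s) :
    ∀ n : ℕ, ∀ w : (I → ℚ) ≃ₗ[ℚ] (I → ℚ), ∀ x : I,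
      HasW s Set.univ w → lenS s Set.univ w = n →
      lenS s Set.univ w < lenS s Set.univ (w * s x) → NN (w (sr x)) := by
  intro n
  induction n using Nat.strong_induction_on with
  | _ n IH =>
  intro w x hw hn hlt
  rcases Nat.eq_zero_or_pos n with h0 | hpos
  · have h1 : w = 1 := lenS_zero_eq_one hw (by omega)
    subst h1
    intro k
    show (0 : ℚ) ≤ sr x k
    rw [sr_apply]
    split_ifs <;> norm_num
  · -- obtain a last letter
    obtain ⟨l, hlu, hll, hwl⟩ := lenS_exists hw
    have hlne : l ≠ [] := by
      intro h
      rw [h] at hll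
      simp at hll
      omega
    obtain ⟨t, y, rfl⟩ : ∃ t y, l = t ++ [y] :=
      ⟨l.dropLast, l.getLast hlne, by rw [List.dropLast_append_getLast hlne]⟩
    rw [hn] at hlt
    have htlen : t.length + 1 = n := by
      rw [← hn, ← hll]; simp
    have hwt : w * s y = wprod s t := by
      rw [← hwl, wprod_append, wprod_cons, wprod_nil, mul_one, mul_assoc, s_sq hA hs, mul_one]
    have hwy_le : lenS s Set.univ (w * s y) ≤ n - 1 := by
      rw [hwt]
      have := lenS_le (s := s) (T := Set.univ) (l := t) (fun z _ => Set.mem_univ z) rfl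
      omega
    have hyx : y ≠ x := by
      intro h
      subst h
      omega
    -- the coset minimization
    set T : Set I := {x, y} with hT
    set K : Set ℕ := {k | ∃ (v : (I → ℚ) ≃ₗ[ℚ] (I → ℚ)) (ld : List I),
      HasW s Set.univ v ∧ lenS s Set.univ v = k ∧ (∀ z ∈ ld, z ∈ T) ∧
      w = v * wprod s ld ∧ k + ld.length = n} with hK
    have hKne : (n - 1) ∈ K := by
      refine ⟨w * s y, [y], HasW_mul hw (HasW_sx y (Set.mem_univ y)), ?_, ?_, ?_, ?_⟩
      · have h1 : lenS s Set.univ w ≤ lenS s Set.univ (w * s y) + 1 :=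
          lenS_le_mul_sx hA hs (HasW_mul hw (HasW_sx y (Set.mem_univ y))) (Set.mem_univ y)
        omega
      · intro z hz
        rw [List.mem_singleton.mp hz]
        exact Set.mem_insert_of_mem x rfl
      · rw [wprod_cons, wprod_nil, mul_one, mul_assoc, s_sq hA hs, mul_one]
      · have h1 : lenS s Set.univ w ≤ lenS s Set.univ (w * s y) + 1 :=
          lenS_le_mul_sx hA hs (HasW_mul hw (HasW_sx y (Set.mem_univ y))) (Set.mem_univ y)
        simp only [List.length_singleton]
        omega
    set m := sInf K with hm
    obtain ⟨v, ld, hv, hvm, hldT, hw_eq, hsum⟩ : m ∈ K := Nat.sInf_mem ⟨n - 1, hKne⟩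
    have hm_le : m ≤ n - 1 := Nat.sInf_le hKne
    -- minimality: both descents increase length of v
    have hdesc : ∀ z : I, z ∈ T → lenS s Set.univ v < lenS s Set.univ (v * s z) := by
      intro z hz
      by_contra hcon
      push_neg at hcon
      have hne := lenS_mul_sx_ne hA hs (T := Set.univ) hv (Set.mem_univ z)
      have hlt2 : lenS s Set.univ (v * s z) < m := by omega
      have htri : lenS s Set.univ v ≤ lenS s Set.univ (v * s z) + 1 :=
        lenS_le_mul_sx hA hs (HasW_mul hv (HasW_sx z (Set.mem_univ z))) (Set.mem_univ z)
      have hmem : lenS s Set.univ (v * s z) ∈ K := by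
        refine ⟨v * s z, z :: ld, HasW_mul hv (HasW_sx z (Set.mem_univ z)), rfl, ?_, ?_, ?_⟩
        · intro a ha
          rcases List.mem_cons.mp ha with h | h
          · rw [h]; exact hz
          · exact hldT a h
        · rw [wprod_cons]
          have hrw : v * s z * (s z * wprod s ld) = v * wprod s ld := by
            rw [← mul_assoc, mul_assoc v (s z) (s z), s_sq hA hs, mul_one]
          rw [hrw]
          exact hw_eq
        · simp only [List.length_cons]
          omega
      have := Nat.sInf_le hmem
      omega
    -- the T-length of d
    set d := wprod s ld with hd
    have hdT : HasW s T d := ⟨ld, hldT, rfl⟩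
    have hdlen : lenS s T d = ld.length := by
      have h1 : lenS s T d ≤ ld.length := lenS_le hldT rfl
      obtain ⟨ld₀, hld₀, hld₀l, hld₀e⟩ := lenS_exists hdT
      have h2 : lenS s Set.univ w ≤ m + lenS s T d := by
        obtain ⟨lv, hlv, hlvl, hlve⟩ := lenS_exists hv
        have : wprod s (lv ++ ld₀) = w := by
          rw [wprod_append, hlve, hld₀e, ← hw_eq]
        have := lenS_le (s := s) (T := Set.univ) (l := lv ++ ld₀) (fun z _ => Set.mem_univ z) this
        rw [List.length_append, hlvl, hld₀l] at this
        rw [hvm] at this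
        exact this
      omega
    -- T-length of d increases with s x
    have hdx : lenS s T d < lenS s T (d * s x) := by
      by_contra hcon
      push_neg at hcon
      have hxT : x ∈ T := Set.mem_insert x {y}
      have hne := lenS_mul_sx_ne hA hs (T := T) hdT hxT
      have hlt2 : lenS s T (d * s x) < ld.length := by omega
      obtain ⟨ld₁, hld₁, hld₁l, hld₁e⟩ := lenS_exists (HasW_mul hdT (HasW_sx x hxT))
      obtain ⟨lv, hlv, hlvl, hlve⟩ := lenS_exists hv
      have hww : wprod s (lv ++ ld₁) = w * s x := by
        rw [wprod_append, hlve, hld₁e, hw_eq, mul_assoc]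
      have hle := lenS_le (s := s) (T := Set.univ) (l := lv ++ ld₁) (fun z _ => Set.mem_univ z) hww
      rw [List.length_append, hlvl, hld₁l] at hle
      omega
    -- apply the dihedral lemma
    have hxyne : x ≠ y := Ne.symm hyx
    obtain ⟨hNN, hsupp⟩ := dihedral hA hs hB hxyne hdT hdx
    -- decompose d (sr x)
    set u := d (sr x) with hu
    have hudec : u = u x • sr x + u y • sr y := by
      ext k
      by_cases hk1 : k = x
      · subst hk1
        simp [sr_apply, hxyne, Ne.symm hxyne]
      by_cases hk2 : k = y
      · subst hk2
        simp [sr_apply, hxyne, Ne.symm hxyne, hk1]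
      · simp [sr_apply, hk1, hk2, hsupp k hk1 hk2]
    -- IH applies to v
    have hvx : NN (v (sr x)) := IH m (by omega) v x hv hvm (hdesc x (Set.mem_insert x {y}))
    have hvy : NN (v (sr y)) := IH m (by omega) v y hv hvm (hdesc y (Set.mem_insert_of_mem x rfl))
    -- conclude
    have hwv : ∀ z : I → ℚ, w z = v (d z) := by
      intro z
      rw [hw_eq]
      rfl
    intro k
    rw [hwv (sr x), ← hu, hudec, map_add, map_smul, map_smul]
    have h1 := hvx k
    have h2 := hvy k
    have hux : 0 ≤ u x := hNN x
    have huy : 0 ≤ u y := hNN y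
    simp only [Pi.add_apply, Pi.smul_apply, smul_eq_mul]
    exact add_nonneg (mul_nonneg hux h1) (mul_nonneg huy h2)

/-! ### Corollaries of Theorem R -/

lemma HasW_inv (hA : IsGCM A) (hs : IsReflRep A s) {T : Set I}
    {w : (I → ℚ) ≃ₗ[ℚ] (I → ℚ)} (hw : HasW s T w) : HasW s T w⁻¹ := by
  obtain ⟨l, hl, rfl⟩ := hw
  exact ⟨l.reverse, fun x hx => hl x (List.mem_reverse.mp hx), wprod_reverse hA hs l⟩

lemma lenS_inv (hA : IsGCM A) (hs : IsReflRep A s) {T : Set I}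
    {w : (I → ℚ) ≃ₗ[ℚ] (I → ℚ)} (hw : HasW s T w) : lenS s T w⁻¹ = lenS s T w := by
  have key : ∀ u : (I → ℚ) ≃ₗ[ℚ] (I → ℚ), HasW s T u → lenS s T u⁻¹ ≤ lenS s T u := by
    intro u hu
    obtain ⟨l, hl, hll, rfl⟩ := lenS_exists hu
    have := lenS_le (s := s) (T := T) (l := l.reverse)
      (fun x hx => hl x (List.mem_reverse.mp hx)) (wprod_reverse hA hs l)
    rwa [List.length_reverse, hll] at this
  refine le_antisymm (key w hw) ?_
  have := key w⁻¹ (HasW_inv hA hs hw)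
  rwa [inv_inv] at this

lemma mem_HasW (hA : IsGCM A) (hs : IsReflRep A s) {w : (I → ℚ) ≃ₗ[ℚ] (I → ℚ)}
    (hw : w ∈ Wgrp s) : HasW s Set.univ w := by
  obtain ⟨l, hl⟩ := exists_word hA hs hw
  exact ⟨l, fun x _ => Set.mem_univ x, hl⟩

lemma root_dichotomy (hA : IsGCM A) (hs : IsReflRep A s) (hB : IsInvForm A ε B s)
    {w : (I → ℚ) ≃ₗ[ℚ] (I → ℚ)} (hw : w ∈ Wgrp s) (j : I) :
    NN (w (sr j)) ∨ NP (w (sr j)) := by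
  have hw' : HasW s Set.univ w := mem_HasW hA hs hw
  have hne := lenS_mul_sx_ne hA hs (T := Set.univ) hw' (Set.mem_univ j)
  rcases lt_or_gt_of_ne (Ne.symm hne) with h | h
  · exact Or.inl (thmR hA hs hB (lenS s Set.univ w) w j hw' rfl h)
  · right
    set w' := w * s j with hw'def
    have hw'w : w' * s j = w := by
      rw [hw'def, mul_assoc, s_sq hA hs, mul_one]
    have hWw' : HasW s Set.univ w' := HasW_mul hw' (HasW_sx j (Set.mem_univ j))
    have hNN : NN (w' (sr j)) := by
      refine thmR hA hs hB (lenS s Set.univ w') w' j hWw' rfl ?_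
      rw [hw'w]
      exact h
    have happ : w (sr j) = - (w' (sr j)) := by
      rw [← hw'w]
      show w' ((s j) (sr j)) = - (w' (sr j))
      rw [s_apply_sr hA hs, map_neg]
    intro k
    rw [happ]
    simpa using hNN k

/-! ### The orbit lemma for antidominant vectors -/

theorem orbit_lemma (hA : IsGCM A) (hs : IsReflRep A s) (hB : IsInvForm A ε B s)
    {β : I → ℚ} (hdom : ∀ j, B (sr j) β ≤ 0) :
    ∀ n : ℕ, ∀ w : (I → ℚ) ≃ₗ[ℚ] (I → ℚ), HasW s Set.univ w → lenS s Set.univ w = n →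
      NN (w β - β) := by
  intro n
  induction n using Nat.strong_induction_on with
  | _ n IH =>
  intro w hw hn
  rcases Nat.eq_zero_or_pos n with h0 | hpos
  · have h1 : w = 1 := lenS_zero_eq_one hw (by omega)
    subst h1
    intro k
    show (0:ℚ) ≤ ((1 : (I → ℚ) ≃ₗ[ℚ] (I → ℚ)) β - β) k
    show (0:ℚ) ≤ (β - β) k
    simp
  · obtain ⟨l, hlu, hll, hwl⟩ := lenS_exists hw
    have hlne : l ≠ [] := by
      intro h
      rw [h] at hll
      simp at hll
      omega
    obtain ⟨j, t, rfl⟩ := List.exists_cons_of_ne_nil hlne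
    set w' := wprod s t with hw'def
    have hcons : w = s j * w' := by rw [← hwl, wprod_cons]
    have htlen : t.length + 1 = n := by
      have : (j :: t).length = n := by rw [hll, hn]
      simpa using this
    have hw't : HasW s Set.univ w' := ⟨t, fun x _ => Set.mem_univ x, rfl⟩
    have hlw' : lenS s Set.univ w' = n - 1 := by
      have h1 : lenS s Set.univ w' ≤ n - 1 := by
        rw [hw'def]
        have := lenS_le (s := s) (T := Set.univ) (l := t) (fun z _ => Set.mem_univ z) rfl
        omega
      obtain ⟨t₀, ht₀, ht₀l, ht₀e⟩ := lenS_exists hw't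
      have h2 : lenS s Set.univ w ≤ t₀.length + 1 := by
        have hww : wprod s (j :: t₀) = w := by rw [wprod_cons, ht₀e, ← hcons]
        have := lenS_le (s := s) (T := Set.univ) (l := j :: t₀) (fun z _ => Set.mem_univ z) hww
        simpa using this
      omega
    -- the coefficient is nonpositive
    have hinvw : w'⁻¹ * s j = w⁻¹ := by
      rw [hcons, mul_inv_rev, s_inv hA hs]
    have hNNu : NN (w'⁻¹ (sr j)) := by
      refine thmR hA hs hB (lenS s Set.univ w'⁻¹) w'⁻¹ j (HasW_inv hA hs hw't) rfl ?_
      rw [hinvw, lenS_inv hA hs hw't, lenS_inv hA hs hw, hlw', hn]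
      omega
    have hBval : B (w'⁻¹ (sr j)) β ≤ 0 := by
      rw [B_expand_left]
      refine Finset.sum_nonpos (fun k _ => ?_)
      exact mul_nonpos_iff.mpr (Or.inl ⟨hNNu k, hdom k⟩)
    have hBeq : B (sr j) (w' β) = B (w'⁻¹ (sr j)) β := by
      have h1 := Binv_wprod hB t.reverse (sr j) (w' β)
      rw [show wprod s t.reverse = w'⁻¹ from wprod_reverse hA hs t] at h1
      rw [show (w'⁻¹) (w' β) = ((w'⁻¹ * w') β) from rfl, inv_mul_cancel] at h1
      exact h1.symm
    have hcf : cf A j (w' β) ≤ 0 := by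
      have h1 : ε j * cf A j (w' β) = B (sr j) (w' β) := (B_sr_left hB j _).symm
      have h2 : ε j * cf A j (w' β) ≤ 0 := by rw [h1, hBeq]; exact hBval
      nlinarith [hB.1 j]
    have hIH : NN (w' β - β) := IH (n - 1) (by omega) w' hw't hlw'
    have happ : w β = w' β - cf A j (w' β) • sr j := by
      rw [hcons]
      show (s j) (w' β) = _
      rw [s_apply hs]
    intro k
    rw [happ]
    have h1 := hIH k
    have h2 : 0 ≤ - cf A j (w' β) * sr j k := by
      apply mul_nonneg (by linarith)
      rw [sr_apply]
      split_ifs <;> norm_num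
    simp only [Pi.sub_apply, Pi.smul_apply, smul_eq_mul] at h1 h2 ⊢
    nlinarith

/-! ### The diagram automorphism action -/

section Tau

variable {τ : Equiv.Perm I} {tV : (I → ℚ) ≃ₗ[ℚ] (I → ℚ)}

lemma tv_apply (hττ : ∀ a, τ (τ a) = a) (htv : ∀ m, tV (sr m) = sr (τ m)) (v : I → ℚ) (k : I) :
    tV v k = v (τ k) := by
  have h1 : tV v = ∑ m, v m • sr (τ m) := by
    conv_lhs => rw [eq_sum_sr v]
    rw [map_sum]
    refine Finset.sum_congr rfl (fun m _ => ?_)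
    rw [map_smul, htv m]
  rw [h1, Finset.sum_apply]
  rw [Finset.sum_eq_single (τ k)]
  · simp [sr_apply, hττ]
  · intro m _ hm
    have hne : k ≠ τ m := fun h => hm (by rw [h, hττ])
    simp [sr_apply, hne]
  · intro h; exact absurd (Finset.mem_univ (τ k)) h

lemma cf_tV (hAτ : ∀ a b, A (τ a) (τ b) = A a b) (hττ : ∀ a, τ (τ a) = a)
    (htv : ∀ m, tV (sr m) = sr (τ m)) (j : I) (v : I → ℚ) :
    cf A j (tV v) = cf A (τ j) v := by
  unfold cf
  have h1 : ∀ k, tV v k * (A j k : ℚ) = v (τ k) * (A j k : ℚ) := by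
    intro k; rw [tv_apply hττ htv]
  rw [Finset.sum_congr rfl (fun k _ => h1 k)]
  rw [← Equiv.sum_comp τ (fun m => v m * (A (τ j) m : ℚ))]
  refine Finset.sum_congr rfl (fun k _ => ?_)
  have : A (τ j) (τ k) = A j k := hAτ j k
  rw [this]

lemma tV_sq (hττ : ∀ a, τ (τ a) = a) (htv : ∀ m, tV (sr m) = sr (τ m)) :
    tV * tV = 1 := by
  apply LinearEquiv.toLinearMap_injective
  apply LinearMap.ext
  intro v
  show tV (tV v) = v
  ext k
  rw [tv_apply hττ htv, tv_apply hττ htv, hττ k]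

lemma conj_tV_s (hs : IsReflRep A s) (hAτ : ∀ a b, A (τ a) (τ b) = A a b)
    (hττ : ∀ a, τ (τ a) = a) (htv : ∀ m, tV (sr m) = sr (τ m)) (j : I) :
    tV * s j * tV = s (τ j) := by
  apply LinearEquiv.toLinearMap_injective
  apply LinearMap.ext
  intro v
  show tV ((s j) (tV v)) = (s (τ j)) v
  rw [s_apply hs, s_apply hs, map_sub, map_smul, htv j, cf_tV hAτ hττ htv]
  congr 1
  ext k
  rw [tv_apply hττ htv, tv_apply hττ htv, hττ k]

lemma conj_tV_wprod (hs : IsReflRep A s) (hAτ : ∀ a b, A (τ a) (τ b) = A a b)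
    (hττ : ∀ a, τ (τ a) = a) (htv : ∀ m, tV (sr m) = sr (τ m)) (l : List I) :
    tV * wprod s l * tV = wprod s (l.map τ) := by
  induction l with
  | nil =>
      rw [wprod_nil, List.map_nil, wprod_nil, mul_one]
      exact tV_sq hττ htv
  | cons x t ih =>
      rw [wprod_cons, List.map_cons, wprod_cons, ← ih, ← conj_tV_s hs hAτ hττ htv x]
      have h2 : tV * tV = 1 := tV_sq hττ htv
      have key : tV * (s x * wprod s t) * tV = (tV * s x * tV) * (tV * wprod s t * tV) := by
        rw [show (tV * s x * tV) * (tV * wprod s t * tV)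
            = tV * s x * (tV * tV) * wprod s t * tV by group, h2]
        group
      exact key

end Tau

/-! ### Elements of a finite parabolic fixing all its simple roots are trivial -/

lemma span_diff (hs : IsReflRep A s) {X : Set I} (l : List I) (hl : ∀ x ∈ l, x ∈ X)
    (v : I → ℚ) : wprod s l v - v ∈ Submodule.span ℚ (sr '' X) := by
  induction l with
  | nil =>
      show (1 : (I → ℚ) ≃ₗ[ℚ] (I → ℚ)) v - v ∈ _
      show v - v ∈ _
      rw [sub_self]
      exact Submodule.zero_mem _
  | cons x t ih =>
      have hxX : x ∈ X := hl x (by simp)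
      have iht := ih (fun z hz => hl z (by simp [hz]))
      rw [wprod_cons]
      show (s x) (wprod s t v) - v ∈ _
      have h1 : (s x) (wprod s t v) - v
          = ((s x) (wprod s t v) - wprod s t v) + (wprod s t v - v) := by ring_nf
      rw [h1]
      refine Submodule.add_mem _ ?_ iht
      rw [s_apply hs]
      have h2 : wprod s t v - cf A x (wprod s t v) • sr x - wprod s t v
          = - (cf A x (wprod s t v) • sr x) := by ring_nf
      rw [h2]
      exact Submodule.neg_mem _ (Submodule.smul_mem _ _ (Submodule.subset_span ⟨x, hxX, rfl⟩))

lemma para_fix (hA : IsGCM A) (hs : IsReflRep A s) {X : Set I} (hfin : Finite (Wpara s X))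
    {u : (I → ℚ) ≃ₗ[ℚ] (I → ℚ)} (hu : ∃ l : List I, (∀ x ∈ l, x ∈ X) ∧ wprod s l = u)
    (hfix : ∀ j ∈ X, u (sr j) = sr j) : u = 1 := by
  classical
  have hspan : ∀ v : I → ℚ, u v - v ∈ Submodule.span ℚ (sr '' X) := by
    obtain ⟨l, hl, rfl⟩ := hu
    exact fun v => span_diff hs l hl v
  have hufix : ∀ z ∈ Submodule.span ℚ (sr '' X), u z = z := by
    intro z hz
    induction hz using Submodule.span_induction with
    | mem y hy =>
        obtain ⟨j, hjX, rfl⟩ := hy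
        exact hfix j hjX
    | zero => exact map_zero u
    | add y z _ _ hy hz => rw [map_add, hy, hz]
    | smul c y _ hy => rw [map_smul, hy]
  have hupow : ∀ (m : ℕ) (v : I → ℚ), (u ^ m) v = v + (m : ℚ) • (u v - v) := by
    intro m
    induction m with
    | zero => intro v; simp
    | succ m ih =>
        intro v
        have h1 : u ^ (m + 1) = u * u ^ m := by rw [pow_succ']
        rw [h1]
        show u ((u ^ m) v) = _
        rw [ih v, map_add, map_smul, hufix _ (hspan v)]
        have h2 : u v = v + (u v - v) := by ring_nf
        rw [h2]
        push_cast
        module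
  obtain ⟨m, hm, hum⟩ : ∃ m : ℕ, 0 < m ∧ u ^ m = 1 := by
    obtain ⟨l, hl, hwu⟩ := hu
    have huW : u ∈ Wpara s X := hwu ▸ wprod_memX l hl
    obtain ⟨a, b, hne, hab⟩ :=
      Finite.exists_ne_map_eq_of_infinite (fun n : ℕ => (⟨u ^ n, pow_mem huW n⟩ : Wpara s X))
    have hval : u ^ a = u ^ b := congrArg Subtype.val hab
    rcases Nat.lt_or_ge a b with h | h
    · refine ⟨b - a, by omega, ?_⟩
      have hba : u ^ (b - a) * u ^ a = 1 * u ^ a := by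
        rw [← pow_add, show b - a + a = b by omega, one_mul, hval]
      exact mul_right_cancel hba
    · have h' : b < a := by omega
      refine ⟨a - b, by omega, ?_⟩
      have hba : u ^ (a - b) * u ^ b = 1 * u ^ b := by
        rw [← pow_add, show a - b + b = a by omega, one_mul, hval]
      exact mul_right_cancel hba
  apply LinearEquiv.toLinearMap_injective
  apply LinearMap.ext
  intro v
  show u v = v
  have h1 : (u ^ m) v = v := by rw [hum]; rfl
  rw [hupow m v] at h1
  have h2 : (m : ℚ) • (u v - v) = 0 := add_eq_left.mp h1
  have hm0 : (m : ℚ) ≠ 0 := by positivity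
  rcases smul_eq_zero.mp h2 with h | h
  · exact absurd h hm0
  · exact sub_eq_zero.mp h

/-! ### Connectivity and the symmetrizers -/

def Rch (A : I → I → ℤ) : I → I → Prop := Relation.ReflTransGen (fun a b => A a b ≠ 0)

lemma Rch_refl (a : I) : Rch A a a := Relation.ReflTransGen.refl

lemma wprod_supp_reach (hA : IsGCM A) (hs : IsReflRep A s) (r : I) :
    ∀ (l : List I) (v : I → ℚ), (∀ k, v k ≠ 0 → Rch A r k) →
      ∀ k, wprod s l v k ≠ 0 → Rch A r k := by
  intro l
  induction l with
  | nil => intro v hv k hk; exact hv k hk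
  | cons x t ih =>
      intro v hv k hk
      rw [wprod_cons] at hk
      have hk' : (s x) (wprod s t v) k ≠ 0 := hk
      have hu := ih v hv
      rw [s_apply hs] at hk'
      by_cases hkx : k = x
      · subst hkx
        simp only [Pi.sub_apply, Pi.smul_apply, smul_eq_mul, sr_apply_self, mul_one] at hk'
        by_cases hux : wprod s t v k ≠ 0
        · exact hu k hux
        · push_neg at hux
          have hcf : cf A k (wprod s t v) ≠ 0 := by
            intro h0
            rw [hux, h0] at hk'
            norm_num at hk'
          unfold cf at hcf
          obtain ⟨m, _, hm⟩ := Finset.exists_ne_zero_of_sum_ne_zero hcf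
          have hum : wprod s t v m ≠ 0 := fun h => hm (by rw [h, zero_mul])
          have hAkm : (A k m : ℚ) ≠ 0 := fun h => hm (by rw [h, mul_zero])
          have hAmk : A m k ≠ 0 := by
            intro h0
            exact hAkm (by exact_mod_cast hA.2.2 m k h0)
          exact Relation.ReflTransGen.tail (hu m hum) hAmk
      · simp only [Pi.sub_apply, Pi.smul_apply, smul_eq_mul, sr_apply, if_neg hkx, mul_zero,
          sub_zero] at hk'
        exact hu k hk'

lemma eps_edge (hB : IsInvForm A ε B s) {τ : Equiv.Perm I}
    (hAτ : ∀ a b, A (τ a) (τ b) = A a b) (a b : I) (hab : A a b ≠ 0) :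
    ε (τ a) * ε b = ε (τ b) * ε a := by
  have h1 : ε a * (A a b : ℚ) = ε b * (A b a : ℚ) := by
    have := hB.2.1 (sr a) (sr b)
    rw [hB.2.2.1 a b, hB.2.2.1 b a] at this
    exact this
  have h2 : ε (τ a) * (A a b : ℚ) = ε (τ b) * (A b a : ℚ) := by
    have := hB.2.1 (sr (τ a)) (sr (τ b))
    rw [hB.2.2.1 (τ a) (τ b), hB.2.2.1 (τ b) (τ a), hAτ a b] at this
    rw [show A (τ b) (τ a) = A b a from hAτ b a] at this
    exact this
  have hQ : (A a b : ℚ) ≠ 0 := by exact_mod_cast hab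
  have h3 : (ε (τ a) * ε b - ε (τ b) * ε a) * (A a b : ℚ) = 0 := by
    linear_combination ε b * h2 - ε (τ b) * h1
  rcases mul_eq_zero.mp h3 with h | h
  · linarith [sub_eq_zero.mp h]
  · exact absurd h hQ

lemma eps_reach (hB : IsInvForm A ε B s) {τ : Equiv.Perm I}
    (hAτ : ∀ a b, A (τ a) (τ b) = A a b) (a b : I) (hab : Rch A a b) :
    ε (τ a) * ε b = ε (τ b) * ε a := by
  induction hab with
  | refl => rfl
  | @tail c b hac hcb ih =>
      have h2 := eps_edge hB hAτ c b hcb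
      have hc := hB.1 c
      have hτc := hB.1 (τ c)
      have hpos : ε c * ε (τ c) ≠ 0 := ne_of_gt (mul_pos hc hτc)
      apply mul_right_cancel₀ hpos
      linear_combination (ε b * ε (τ c)) * ih + (ε a * ε (τ c)) * h2

end Proof



/-- Let `W` be the Weyl group of a symmetrizable Kac-Moody algebra, `(X, τ)` a compatible
decoration with `σ = w_X ∘ τ`, and suppose `i ∈ I \ X` is such that `β := ᾱᵢ = (αᵢ + σ αᵢ)/2`
satisfies `(β, β) ≤ 0` (e.g. `X[i] = X ∪ {i, τ i}` is of infinite type).  Then no involutive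
element `w ∈ W` satisfies `w β = −β`. -/
theorem no_involution_negates_imaginary_restricted_root
    {I : Type} [Fintype I] [DecidableEq I]
    (A : I → I → ℤ) (hA : IsGCM A)
    (s : I → ((I → ℚ) ≃ₗ[ℚ] (I → ℚ))) (hs : IsReflRep A s)
    (ε : I → ℚ) (B : (I → ℚ) →ₗ[ℚ] (I → ℚ) →ₗ[ℚ] ℚ) (hB : IsInvForm A ε B s)
    (X : Set I) (τ : Equiv.Perm I) (tV wX : (I → ℚ) ≃ₗ[ℚ] (I → ℚ))
    (hcd : IsCompatibleDec A s X τ tV wX)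
    (i : I) (hi : i ∉ X)
    (hneg : B (bar (σmap wX tV) (sr i)) (bar (σmap wX tV) (sr i)) ≤ 0) :
    ∀ w ∈ Wgrp s, w * w = 1 →
      w (bar (σmap wX tV) (sr i)) ≠ -(bar (σmap wX tV) (sr i)) := by
  classical
  intro w hwW _ hcontra
  obtain ⟨hAτ, hττ, hXτ, htv, hfin, hwXmem, hwXsq, hwXsr⟩ := hcd
  set β : I → ℚ := bar (σmap wX tV) (sr i) with hβ
  obtain ⟨lX, hlX, hlXe⟩ := exists_wordX hA hs hwXmem
  have hτiX : τ i ∉ X := fun h => hi (by rw [← hττ i]; exact hXτ _ h)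
  set γ : I → ℚ := wX (sr (τ i)) with hγdef
  have hσsri : σmap wX tV (sr i) = γ := by
    show wX (tV (sr i)) = γ
    rw [htv i]
  have hβ2 : β = (2⁻¹ : ℚ) • (sr i + γ) := by
    rw [hβ]
    show (2⁻¹ : ℚ) • (sr i + σmap wX tV (sr i)) = _
    rw [hσsri]
  have hγword : γ = wprod s lX (sr (τ i)) := by rw [hγdef, hlXe]
  -- σ is an involution
  have hq : wX * (tV * wX * tV) = 1 := by
    apply para_fix hA hs hfin
    · refine ⟨lX ++ lX.map τ, ?_, ?_⟩
      · intro z hz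
        rcases List.mem_append.mp hz with h | h
        · exact hlX z h
        · obtain ⟨a, ha, rfl⟩ := List.mem_map.mp h
          exact hXτ a (hlX a ha)
      · rw [wprod_append, hlXe, ← conj_tV_wprod hs hAτ hττ htv lX, hlXe]
    · intro j hj
      show (wX * (tV * wX * tV)) (sr j) = sr j
      have h1 : (tV * wX * tV) (sr j) = - sr (τ j) := by
        show tV (wX (tV (sr j))) = _
        rw [htv j, hwXsr (τ j) (hXτ j hj), hττ j, map_neg, htv j]
      show wX ((tV * wX * tV) (sr j)) = sr j
      rw [h1, map_neg, hwXsr (τ j) (hXτ j hj), hττ j, neg_neg]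
  have hσσ : ∀ v, σmap wX tV (σmap wX tV v) = v := by
    intro v
    show wX (tV (wX (tV v))) = v
    have h1 : (wX * (tV * wX * tV)) v = (1 : (I → ℚ) ≃ₗ[ℚ] (I → ℚ)) v := by rw [hq]
    exact h1
  have hσβ : σmap wX tV β = β := by
    rw [hβ2]
    show wX (tV ((2⁻¹ : ℚ) • (sr i + γ))) = (2⁻¹ : ℚ) • (sr i + γ)
    rw [map_smul, map_smul, map_add, map_add]
    have h1 : wX (tV (sr i)) = γ := hσsri
    have h2 : wX (tV γ) = sr i := by
      have := hσσ (sr i)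
      rw [hσsri] at this
      exact this
    rw [h1, h2, add_comm]
  -- positivity and support of γ
  have hWpara_le : Wpara s X ≤ Wgrp s := Subgroup.closure_mono (by
    rintro g ⟨j, _, rfl⟩; exact ⟨j, rfl⟩)
  have hγcoord : ∀ k, k ∉ X → γ k = sr (τ i) k := by
    intro k hk
    rw [hγword, wprod_coord hs lX hlX (sr (τ i)) hk]
  have hγτi : γ (τ i) = 1 := by rw [hγcoord (τ i) hτiX, sr_apply_self]
  have hγNN : NN γ := by
    rcases root_dichotomy hA hs hB (hWpara_le hwXmem) (τ i) with h | h
    · rw [hγdef]; exact h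
    · exfalso
      have := h (τ i)
      rw [show wX (sr (τ i)) = γ from hγdef.symm, hγτi] at this
      norm_num at this
  have hβi : (2⁻¹ : ℚ) ≤ β i := by
    rw [hβ2]
    have h1 : γ i ≥ 0 := hγNN i
    simp only [Pi.smul_apply, Pi.add_apply, sr_apply_self, smul_eq_mul]
    nlinarith
  -- norm computations
  have hBγγ : B γ γ = ε (τ i) * 2 := by
    rw [hγword, Binv_wprod hB, hB.2.2.1 (τ i) (τ i)]
    rw [show ((A (τ i) (τ i) : ℤ) : ℚ) = 2 by exact_mod_cast hA.1 (τ i)]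
  have hBsrii : B (sr i) (sr i) = ε i * 2 := by
    rw [hB.2.2.1 i i]
    rw [show ((A i i : ℤ) : ℚ) = 2 by exact_mod_cast hA.1 i]
  have hBββeq : B β β = 2⁻¹ * (2⁻¹ * ((B (sr i) (sr i) + B (sr i) γ) + (B γ (sr i) + B γ γ))) := by
    rw [hβ2]
    simp only [map_add, map_smul, LinearMap.add_apply, LinearMap.smul_apply, smul_eq_mul]
    ring
  have hnegβ : B β β ≤ 0 := hneg
  have hBiγ : B (sr i) γ ≤ - ε i - ε (τ i) := by
    have hsym : B γ (sr i) = B (sr i) γ := hB.2.1 _ _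
    rw [hBsrii, hBγγ, hsym] at hBββeq
    linarith
  -- connectivity
  have hγreach : ∀ k, γ k ≠ 0 → Rch A (τ i) k := by
    have hbase : ∀ k, sr (τ i) k ≠ 0 → Rch A (τ i) k := by
      intro k hk
      have hki : k = τ i := by
        by_contra h
        rw [sr_apply, if_neg h] at hk
        exact hk rfl
      rw [hki]
      exact Rch_refl (τ i)
    intro k hk
    rw [hγword] at hk
    exact wprod_supp_reach hA hs (τ i) lX (sr (τ i)) hbase k hk
  have hconn : Rch A (τ i) i := by
    have hcfne : cf A i γ ≠ 0 := by
      intro h0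
      rw [B_sr_left hB i γ, h0, mul_zero] at hBiγ
      nlinarith [hB.1 i, hB.1 (τ i)]
    unfold cf at hcfne
    obtain ⟨k, _, hk⟩ := Finset.exists_ne_zero_of_sum_ne_zero hcfne
    have hγk : γ k ≠ 0 := fun h => hk (by rw [h, zero_mul])
    have hAik : (A i k : ℚ) ≠ 0 := fun h => hk (by rw [h, mul_zero])
    have hAki : A k i ≠ 0 := by
      intro h0
      exact hAik (by exact_mod_cast hA.2.2 k i h0)
    exact Relation.ReflTransGen.tail (hγreach k hγk) hAki
  -- ε is τ-invariant on the support of β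
  have hτi_eq : ε (τ i) = ε i := by
    have h2 := eps_reach hB hAτ (τ i) i hconn
    rw [hττ i] at h2
    have h3 : (ε (τ i) - ε i) * (ε (τ i) + ε i) = 0 := by linear_combination - h2
    rcases mul_eq_zero.mp h3 with h | h
    · linarith [sub_eq_zero.mp h]
    · nlinarith [hB.1 i, hB.1 (τ i)]
  have heps_m : ∀ m, Rch A (τ i) m → ε (τ m) = ε m := by
    intro m hm
    have h1 := eps_reach hB hAτ (τ i) m hm
    rw [hττ i, hτi_eq] at h1
    have hne : ε i ≠ 0 := ne_of_gt (hB.1 i)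
    rw [mul_comm (ε (τ m)) (ε i)] at h1
    exact (mul_left_cancel₀ hne h1).symm
  have hepsβ : ∀ m, β m ≠ 0 → ε (τ m) = ε m := by
    intro m hm
    apply heps_m
    have hsum : sr i m ≠ 0 ∨ γ m ≠ 0 := by
      by_contra h
      push_neg at h
      apply hm
      rw [hβ2]
      simp [h.1, h.2]
    rcases hsum with h | h
    · have hmi : m = i := by
        by_contra hmi
        rw [sr_apply, if_neg hmi] at h
        exact h rfl
      rw [hmi]
      exact hconn
    · exact hγreach m h
  -- B is σ-invariant against β
  have hcfτ : ∀ (j : I) (v : I → ℚ), cf A j (tV v) = cf A (τ j) v := cf_tV hAτ hττ htv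
  have htVβ : tV β = ∑ m, β m • sr (τ m) := by
    conv_lhs => rw [eq_sum_sr β]
    rw [map_sum]
    exact Finset.sum_congr rfl (fun m _ => by rw [map_smul, htv m])
  have hBtV : ∀ b, B (tV β) (tV b) = B β b := by
    intro b
    rw [htVβ, map_sum, LinearMap.sum_apply, B_expand_left (B := B) β b]
    refine Finset.sum_congr rfl (fun m _ => ?_)
    rw [map_smul, LinearMap.smul_apply, smul_eq_mul]
    by_cases hm : β m = 0
    · rw [hm, zero_mul, zero_mul]
    · rw [B_sr_left hB (τ m), hcfτ (τ m) b, hττ m, hepsβ m hm, ← B_sr_left hB m b]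
  have hBσ : ∀ b, B β (σmap wX tV b) = B β b := by
    intro b
    have h1 : B β (σmap wX tV b) = B (σmap wX tV β) (σmap wX tV b) := by rw [hσβ]
    have h2 : B (σmap wX tV β) (σmap wX tV b) = B (tV β) (tV b) := by
      show B (wX (tV β)) (wX (tV b)) = B (tV β) (tV b)
      rw [← hlXe]
      exact Binv_wprod hB lX _ _
    rw [h1, h2, hBtV b]
  -- antidominance
  have hXzero : ∀ j ∈ X, B β (sr j) = 0 := by
    intro j hj
    have hσj : σmap wX tV (sr j) = - sr j := by
      show wX (tV (sr j)) = - sr j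
      rw [htv j, hwXsr (τ j) (hXτ j hj), hττ j]
    have h1 := hBσ (sr j)
    rw [hσj, map_neg] at h1
    linarith
  have hBβi : B β (sr i) = B β β := by
    have h1 := hBσ (sr i)
    rw [hσsri] at h1
    have h2 : B β β = 2⁻¹ * (B β (sr i) + B β γ) := by
      have hx : B β ((2⁻¹ : ℚ) • (sr i + γ)) = 2⁻¹ * (B β (sr i) + B β γ) := by
        rw [map_smul, map_add, smul_eq_mul]
      rw [← hx, ← hβ2]
    rw [← h1] at h2
    linarith
  have hBβτi : B β (sr (τ i)) = B β β := by
    set γ' : I → ℚ := wX (sr i) with hγ'def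
    have hσγ' : σmap wX tV (sr (τ i)) = γ' := by
      show wX (tV (sr (τ i))) = γ'
      rw [htv (τ i), hττ i]
    have hγ'coord : ∀ k, k ∉ X → γ' k = sr i k := by
      intro k hk
      rw [hγ'def, ← hlXe, wprod_coord hs lX hlX (sr i) hk]
    have hγ'i : γ' i = 1 := by rw [hγ'coord i hi, sr_apply_self]
    have hexp : B β γ' = ∑ k, γ' k * B β (sr k) := B_expand_right β γ'
    have hsum : ∑ k, γ' k * B β (sr k) = B β β := by
      rw [Finset.sum_eq_single i]
      · rw [hγ'i, one_mul, hBβi]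
      · intro k _ hki
        by_cases hkX : k ∈ X
        · rw [hXzero k hkX, mul_zero]
        · rw [hγ'coord k hkX, sr_apply, if_neg hki, zero_mul]
      · intro h; exact absurd (Finset.mem_univ i) h
    have h1 := hBσ (sr (τ i))
    rw [hσγ'] at h1
    rw [← h1, hexp, hsum]
  have hBother : ∀ j, j ∉ X → j ≠ i → j ≠ τ i → B β (sr j) ≤ 0 := by
    intro j hjX hji hjτ
    have hdec : B β (sr j) = 2⁻¹ * (B (sr i) (sr j) + B γ (sr j)) := by
      conv_lhs => rw [hβ2]
      simp only [map_smul, LinearMap.smul_apply, smul_eq_mul, map_add, LinearMap.add_apply]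
    have h1 : B (sr i) (sr j) ≤ 0 := by
      rw [hB.2.2.1 i j]
      have hij : (A i j : ℚ) ≤ 0 := by exact_mod_cast hA.2.1 i j (Ne.symm hji)
      exact mul_nonpos_iff.mpr (Or.inl ⟨le_of_lt (hB.1 i), hij⟩)
    have h2 : B γ (sr j) ≤ 0 := by
      rw [B_expand_left γ (sr j)]
      refine Finset.sum_nonpos (fun k _ => ?_)
      by_cases hγk : γ k = 0
      · rw [hγk, zero_mul]
      · have hkj : k ≠ j := by
          intro h
          subst h
          by_cases hkX : k ∈ X
          · exact hjX hkX
          · have hcoord := hγcoord k hkX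
            rw [sr_apply] at hcoord
            by_cases hkτ : k = τ i
            · exact hjτ hkτ
            · rw [if_neg hkτ] at hcoord
              exact hγk hcoord
        have hBk : B (sr k) (sr j) ≤ 0 := by
          rw [hB.2.2.1 k j]
          have hkj' : (A k j : ℚ) ≤ 0 := by exact_mod_cast hA.2.1 k j hkj
          exact mul_nonpos_iff.mpr (Or.inl ⟨le_of_lt (hB.1 k), hkj'⟩)
        exact mul_nonpos_iff.mpr (Or.inl ⟨hγNN k, hBk⟩)
    rw [hdec]
    linarith
  have hdom : ∀ j, B (sr j) β ≤ 0 := by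
    intro j
    rw [hB.2.1 (sr j) β]
    by_cases hjX : j ∈ X
    · rw [hXzero j hjX]
    by_cases hji : j = i
    · rw [hji, hBβi]; exact hnegβ
    by_cases hjτ : j = τ i
    · rw [hjτ, hBβτi]; exact hnegβ
    · exact hBother j hjX hji hjτ
  have hNN := orbit_lemma hA hs hB hdom (lenS s Set.univ w) w (mem_HasW hA hs hwW) rfl
  have h1 := hNN i
  rw [hcontra] at h1
  simp only [Pi.sub_apply, Pi.neg_apply] at h1
  linarith [hβi]


end KMStmt
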